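/- Let q = 2^f, E = F_{q^2}, and T ⊆ E^* an F_q^*-invariant subset. Then the condition 'Σ_{t∈T} K(ψ_E, t, u) = q^2 − |T| for all u ∈ T, and = −|T| for all u ∈ E^* \ T' holds if and only if T = {t^{−1} : t ∈ T}. -/

import Mathlib

/-- The canonical additive character `ψ_K(x) = exp(2πi·Tr_{K/F_p}(x)/p)` of a finite
field `K` of characteristic `p`. -/
noncomputable def canChar (p : ℕ) (K : Type*) [Field K] [Fintype K] [Algebra (ZMod p) K]
    (x : K) : ℂ :=
  Complex.exp (2 * Real.pi * Complex.I * ((Algebra.trace (ZMod p) K x).val : ℂ) / (p : ℂ))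

/-- The Kloosterman sum `K(ψ_F, a1, a2) = Σ_{x ∈ F^*} ψ_F(a1 x + a2 x^{-1})`. -/
noncomputable def kloosterman (p : ℕ) (F : Type*) [Field F] [Fintype F] [DecidableEq F]
    [Algebra (ZMod p) F] (a1 a2 : F) : ℂ :=
  ∑ x : Fˣ, canChar p F (a1 * (x : F) + a2 * (x : F)⁻¹)

/-!
Write `ψ` for the canonical character of `E` and `q = |F|`. Since `E/F` is quadratic of
characteristic `2`, `Tr_{E/F}(1) = 2 = 0`, so the kernel of `Tr_{E/F}` is exactly `F`; hence
`Σ_{c ∈ F} ψ(c w)` is `q` if `w ∈ F` and `0` otherwise. Averaging over the `F^*`-orbits of `T`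
gives `Σ_{t ∈ T} ψ(t z) = q [z⁻¹ ∈ T] - |T| / (q - 1)` for `z ≠ 0`, and opening the Kloosterman
sums turns this into `Σ_{t ∈ T} K(ψ, t, u) = q² [u⁻¹ ∈ T] - |T|`. The condition therefore says
precisely that `u ∈ T ↔ u⁻¹ ∈ T` for every `u ≠ 0`.
-/

open Finset Module

theorem Fintype.sum_units_eq_sum_sub {G₀ M : Type*} [GroupWithZero G₀] [Fintype G₀]
    [DecidableEq G₀] [AddCommGroup M] (f : G₀ → M) : ∑ x : G₀ˣ, f x = ∑ x, f x - f 0 := by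
  rw [Fintype.sum_eq_add_sum_subtype_ne f 0, add_sub_cancel_left]
  exact Fintype.sum_equiv unitsEquivNeZero _ _ fun _ ↦ rfl

theorem Finset.sum_sum_smul_of_forall_smul_mem {G α M : Type*} [Group G] [Fintype G]
    [MulAction G α] [AddCommMonoid M] {T : Finset α} (hT : ∀ g : G, ∀ t ∈ T, g • t ∈ T)
    (f : α → M) : ∑ g : G, ∑ t ∈ T, f (g • t) = Fintype.card G • ∑ t ∈ T, f t := by
  rw [← Finset.card_univ, ← Finset.sum_const]
  refine Finset.sum_congr rfl fun g _ ↦ ?_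
  exact Finset.sum_nbij' (g • ·) (g⁻¹ • ·) (hT g) (hT g⁻¹) (fun t _ ↦ inv_smul_smul g t)
    (fun t _ ↦ smul_inv_smul g t) fun _ _ ↦ rfl

theorem Finset.image_inv_eq_self_iff {G : Type*} [InvolutiveInv G] [DecidableEq G]
    {T : Finset G} : T.image (·⁻¹) = T ↔ ∀ t ∈ T, t⁻¹ ∈ T :=
  ⟨fun h _ ht ↦ h ▸ mem_image_of_mem _ ht,
    fun h ↦ eq_of_subset_of_card_le (image_subset_iff.mpr h)
      (card_image_of_injective T inv_injective).ge⟩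

theorem Module.finrank_eq_of_card_eq_pow {F E : Type*} [Field F] [Fintype F] [AddCommGroup E]
    [Module F E] [Fintype E] {n : ℕ} (h : Fintype.card E = Fintype.card F ^ n) :
    finrank F E = n := by
  have : Module.Finite F E := .of_finite
  exact Nat.pow_right_injective Fintype.one_lt_card ((card_eq_pow_finrank (K := F)).symm.trans h)

section CanonicalCharacter

variable (p : ℕ) [Fact p.Prime] (K : Type*) [Field K] [Fintype K] [Algebra (ZMod p) K]

noncomputable def canAddChar : AddChar K ℂ :=
  ZMod.stdAddChar.compAddMonoidHom (Algebra.trace (ZMod p) K).toAddMonoidHom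

variable {K}

theorem canAddChar_apply (x : K) : canAddChar p K x = canChar p K x := by
  simp [canAddChar, canChar, ZMod.stdAddChar_apply, ZMod.toCircle_apply]

theorem canChar_add (x y : K) : canChar p K (x + y) = canChar p K x * canChar p K y := by
  simp only [← canAddChar_apply, AddChar.map_add_eq_mul]

theorem canChar_zero : canChar p K 0 = 1 := by
  rw [← canAddChar_apply, AddChar.map_zero_eq_one]

theorem canChar_eq_one_iff (x : K) : canChar p K x = 1 ↔ Algebra.trace (ZMod p) K x = 0 := by
  rw [← canAddChar_apply, canAddChar, AddChar.compAddMonoidHom_apply,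
    ← (ZMod.stdAddChar (N := p)).map_zero_eq_one, ZMod.injective_stdAddChar.eq_iff]
  rfl

theorem isPrimitive_canAddChar : (canAddChar p K).IsPrimitive := by
  refine AddChar.IsPrimitive.of_ne_one fun h ↦ Algebra.trace_ne_zero (ZMod p) K ?_
  ext x
  simpa [← canChar_eq_one_iff p, ← canAddChar_apply] using DFunLike.congr_fun h x

theorem sum_units_canChar_mul [DecidableEq K] {b : K} (hb : b ≠ 0) :
    ∑ x : Kˣ, canChar p K (x * b) = -1 := by
  have hsum := AddChar.sum_mulShift b (isPrimitive_canAddChar p (K := K))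
  simp only [canAddChar_apply, if_neg hb] at hsum
  rw [Fintype.sum_units_eq_sum_sub (fun x ↦ canChar p K (x * b)), hsum, zero_mul, canChar_zero,
    Nat.cast_zero, zero_sub]

end CanonicalCharacter

theorem forall_trace_algebraMap_mul_eq_zero_iff (p : ℕ) [Fact p.Prime] {F E : Type*} [Field F]
    [Field E] [Fintype F] [Fintype E] [Algebra (ZMod p) F] [Algebra (ZMod p) E] [Algebra F E]
    [IsScalarTower (ZMod p) F E] (w : E) :
    (∀ c : F, Algebra.trace (ZMod p) E (algebraMap F E c * w) = 0) ↔
      Algebra.trace F E w = 0 := by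
  have : Module.Finite F E := .of_finite
  have : Module.Finite (ZMod p) F := .of_finite
  have htower (c : F) : Algebra.trace (ZMod p) E (algebraMap F E c * w) =
      Algebra.trace (ZMod p) F (c * Algebra.trace F E w) := by
    rw [← Algebra.trace_trace (S := F), ← Algebra.smul_def, LinearMap.map_smul, smul_eq_mul]
  simp only [htower]
  refine ⟨fun h ↦ ?_, fun h c ↦ by rw [h, mul_zero, map_zero]⟩
  by_contra hw
  obtain ⟨x, hx⟩ := DFunLike.ne_iff.mp (Algebra.trace_ne_zero (ZMod p) F)
  exact hx (by simpa [hw] using h (x * (Algebra.trace F E w)⁻¹))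

theorem Algebra.trace_eq_zero_iff_mem_range {F E : Type*} [Field F] [Field E] [Finite E]
    [Algebra F E] [CharP F 2] (hE : finrank F E = 2) (w : E) :
    Algebra.trace F E w = 0 ↔ w ∈ Set.range (algebraMap F E) := by
  have : Module.Finite F E := .of_finite
  have hone : Submodule.span F {1} ≤ LinearMap.ker (Algebra.trace F E) := by
    rw [Submodule.span_singleton_le_iff_mem, LinearMap.mem_ker, ← map_one (algebraMap F E),
      Algebra.trace_algebraMap, hE, two_nsmul, CharTwo.add_self_eq_zero]
  have hlt : finrank F (LinearMap.ker (Algebra.trace F E)) < 2 :=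
    hE ▸ Submodule.finrank_lt (LinearMap.ker_eq_top.not.mpr (Algebra.trace_ne_zero F E))
  have hker : Submodule.span F {1} = LinearMap.ker (Algebra.trace F E) := by
    refine Submodule.eq_of_le_of_finrank_eq hone (le_antisymm (Submodule.finrank_mono hone) ?_)
    rw [finrank_span_singleton one_ne_zero]
    omega
  rw [← LinearMap.mem_ker, ← hker, Submodule.mem_span_singleton]
  simp [Algebra.algebraMap_eq_smul_one]

theorem card_filter_mul_mem_range_algebraMap {F E : Type*} [Field F] [Field E] [Fintype F]
    [Algebra F E] [DecidableEq E] {T : Finset E} (hT0 : ∀ t ∈ T, t ≠ 0)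
    (hinv : ∀ t ∈ T, ∀ c : F, c ≠ 0 → algebraMap F E c * t ∈ T) {z : E} (hz : z ≠ 0) :
    #(T.filter (fun t ↦ t * z ∈ Set.range (algebraMap F E))) =
      if z⁻¹ ∈ T then Fintype.card F - 1 else 0 := by
  classical
  have hmem {t : E} (ht : t ∈ T) : t * z ∈ Set.range (algebraMap F E) ↔
      ∃ c : F, c ≠ 0 ∧ algebraMap F E c * z⁻¹ = t := by
    refine ⟨fun ⟨c, hc⟩ ↦ ⟨c, ?_, ?_⟩, fun ⟨c, _, hc⟩ ↦ ⟨c, by rw [← hc, inv_mul_cancel_right₀ hz]⟩⟩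
    · rintro rfl
      exact mul_ne_zero (hT0 t ht) hz (by rw [← hc, map_zero])
    · rw [hc, mul_inv_cancel_right₀ hz]
  split_ifs with hzT
  · have hfilter : T.filter (fun t ↦ t * z ∈ Set.range (algebraMap F E)) =
        (univ.erase 0).image (fun c : F ↦ algebraMap F E c * z⁻¹) := by
      ext t
      simp only [mem_filter, mem_image, mem_erase, mem_univ, and_true]
      refine ⟨fun ⟨ht, h⟩ ↦ (hmem ht).mp h, fun ⟨c, hc, h⟩ ↦ ?_⟩
      have ht : t ∈ T := h ▸ hinv _ hzT c hc
      exact ⟨ht, (hmem ht).mpr ⟨c, hc, h⟩⟩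
    rw [hfilter, card_image_of_injective _ fun a b h ↦ (algebraMap F E).injective
      (mul_right_cancel₀ (inv_ne_zero hz) h), card_erase_of_mem (mem_univ _), card_univ]
  · refine card_eq_zero.mpr (filter_eq_empty_iff.mpr fun t ht h ↦ hzT ?_)
    obtain ⟨c, hc, rfl⟩ := (hmem ht).mp h
    simpa [hc] using hinv _ ht c⁻¹ (inv_ne_zero hc)

section QuadraticExtension

variable {F E : Type*} [Field F] [Field E] [Fintype F] [Fintype E] [DecidableEq E]
  [Algebra (ZMod 2) F] [Algebra (ZMod 2) E] [Algebra F E] [IsScalarTower (ZMod 2) F E]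

theorem sum_canChar_algebraMap_mul (hE : finrank F E = 2) (w : E) :
    ∑ c : F, canChar 2 E (algebraMap F E c * w) =
      if w ∈ Set.range (algebraMap F E) then (Fintype.card F : ℂ) else 0 := by
  have : CharP F 2 := charP_of_injective_algebraMap (algebraMap (ZMod 2) F).injective 2
  let ψ : AddChar F ℂ := (canAddChar 2 E).compAddMonoidHom
    ((AddMonoidHom.mulRight w).comp (algebraMap F E).toAddMonoidHom)
  have hψ (c : F) : ψ c = canChar 2 E (algebraMap F E c * w) :=
    canAddChar_apply 2 (algebraMap F E c * w)
  have htrivial : ψ = 1 ↔ w ∈ Set.range (algebraMap F E) := by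
    simp only [AddChar.eq_one_iff, hψ, canChar_eq_one_iff,
      forall_trace_algebraMap_mul_eq_zero_iff, Algebra.trace_eq_zero_iff_mem_range hE]
  simp_rw [← hψ]
  split_ifs with hw
  · simp [htrivial.mpr hw]
  · exact AddChar.sum_eq_zero_of_ne_one (htrivial.not.mpr hw)

variable {T : Finset E}

theorem sum_canChar_mul_of_invariant (hE : finrank F E = 2) (hT0 : ∀ t ∈ T, t ≠ 0)
    (hinv : ∀ t ∈ T, ∀ c : F, c ≠ 0 → algebraMap F E c * t ∈ T) {z : E} (hz : z ≠ 0) :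
    ∑ t ∈ T, canChar 2 E (t * z) =
      Fintype.card F * (if z⁻¹ ∈ T then 1 else 0) - #T / (Fintype.card F - 1 : ℂ) := by
  classical
  set q := Fintype.card F
  have hq : (q : ℂ) - 1 ≠ 0 := sub_ne_zero.mpr (by exact_mod_cast Fintype.one_lt_card.ne')
  have hunits : (Fintype.card Fˣ : ℂ) = q - 1 := by
    rw [Fintype.card_units, Nat.cast_sub Fintype.card_pos, Nat.cast_one]
  have hsmul_mem : ∀ g : Fˣ, ∀ t ∈ T, g • t ∈ T := fun g t ht ↦ by
    simpa [Units.smul_def, Algebra.smul_def] using hinv t ht g g.ne_zero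
  suffices ((q : ℂ) - 1) * ∑ t ∈ T, canChar 2 E (t * z) =
      q * (q - 1) * (if z⁻¹ ∈ T then 1 else 0) - #T by
    apply mul_left_cancel₀ hq
    rw [this, mul_sub ((q : ℂ) - 1), mul_div_cancel₀ _ hq]
    ring
  calc ((q : ℂ) - 1) * ∑ t ∈ T, canChar 2 E (t * z)
      = ∑ g : Fˣ, ∑ t ∈ T, canChar 2 E ((g • t) * z) := by
        rw [Finset.sum_sum_smul_of_forall_smul_mem hsmul_mem (fun t ↦ canChar 2 E (t * z)),
          nsmul_eq_mul, hunits]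
    _ = ∑ t ∈ T, (∑ c : F, canChar 2 E (algebraMap F E c * (t * z)) - 1) := by
        rw [Finset.sum_comm]
        refine sum_congr rfl fun t _ ↦ ?_
        simp only [Units.smul_def, Algebra.smul_def, mul_assoc]
        rw [Fintype.sum_units_eq_sum_sub (fun c : F ↦ canChar 2 E (algebraMap F E c * (t * z))),
          map_zero, zero_mul, canChar_zero]
    _ = q * #(T.filter (fun t ↦ t * z ∈ Set.range (algebraMap F E))) - #T := by
        simp only [sum_canChar_algebraMap_mul hE]
        rw [sum_sub_distrib, ← sum_filter, sum_const, sum_const, nsmul_eq_mul, nsmul_eq_mul,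
          mul_one, mul_comm]
    _ = q * (q - 1) * (if z⁻¹ ∈ T then 1 else 0) - #T := by
        rw [card_filter_mul_mem_range_algebraMap hT0 hinv hz]
        split_ifs
        · rw [Nat.cast_sub Fintype.card_pos, Nat.cast_one, mul_one]
        · simp

theorem sum_kloosterman_of_invariant (hE : finrank F E = 2) (hT0 : ∀ t ∈ T, t ≠ 0)
    (hinv : ∀ t ∈ T, ∀ c : F, c ≠ 0 → algebraMap F E c * t ∈ T) {u : E} (hu : u ≠ 0) :
    ∑ t ∈ T, kloosterman 2 E t u =
      (Fintype.card F : ℂ) ^ 2 * (if u⁻¹ ∈ T then 1 else 0) - #T := by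
  have hS {z : E} (hz : z ≠ 0) := sum_canChar_mul_of_invariant hE hT0 hinv hz
  set q := Fintype.card F
  have hq : (q : ℂ) - 1 ≠ 0 := sub_ne_zero.mpr (by exact_mod_cast Fintype.one_lt_card.ne')
  have hsumT (g : E → ℂ) : ∑ x : Eˣ, (if (x : E) ∈ T then g x else 0) = ∑ t ∈ T, g t := by
    rw [Fintype.sum_units_eq_sum_sub (fun x ↦ if x ∈ T then g x else 0), sum_ite_mem, univ_inter,
      if_neg fun h ↦ hT0 0 h rfl, sub_zero]
  calc ∑ t ∈ T, kloosterman 2 E t u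
      = ∑ x : Eˣ, (∑ t ∈ T, canChar 2 E (t * x)) * canChar 2 E (u * (x : E)⁻¹) := by
        simp only [kloosterman, canChar_add, sum_mul]
        exact sum_comm
    _ = ∑ x : Eˣ, (q * (if (x : E)⁻¹ ∈ T then 1 else 0) - #T / (q - 1 : ℂ)) *
          canChar 2 E (u * (x : E)⁻¹) :=
        sum_congr rfl fun x _ ↦ by rw [hS x.ne_zero]
    _ = q * ∑ x : Eˣ, (if (x : E) ∈ T then canChar 2 E (x * u) else 0) -
          #T / (q - 1 : ℂ) * ∑ x : Eˣ, canChar 2 E (x * u) := by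
        rw [← Equiv.sum_comp (Equiv.inv Eˣ)]
        simp [sub_mul, sum_sub_distrib, mul_sum, mul_comm u]
    _ = q * ∑ t ∈ T, canChar 2 E (t * u) + #T / (q - 1 : ℂ) := by
        rw [hsumT fun y ↦ canChar 2 E (y * u), sum_units_canChar_mul 2 hu]
        ring
    _ = (q : ℂ) ^ 2 * (if u⁻¹ ∈ T then 1 else 0) - #T := by
        rw [hS hu]
        field_simp
        ring

end QuadraticExtension

open Classical in
/-- Let `q = 2^f`, `E = F_{q^2}` with subfield `F = F_q`, and `T ⊆ E^*` an
`F_q^*`-invariant subset.  Then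
`Σ_{t∈T} K(ψ_E,t,u) = q^2 − |T|` for all `u ∈ T` and `= −|T|` for all
`u ∈ E^* \ T`, if and only if `T = {t⁻¹ : t ∈ T}`. -/
theorem stmt10 (F E : Type*) [Field F] [Field E] [Fintype F] [Fintype E] [DecidableEq E]
    [Algebra (ZMod 2) F] [Algebra (ZMod 2) E] [Algebra F E] [IsScalarTower (ZMod 2) F E]
    (hcard : Fintype.card E = Fintype.card F ^ 2)
    (T : Finset E) (hT0 : ∀ t ∈ T, t ≠ 0)
    (hinv : ∀ t ∈ T, ∀ c : F, c ≠ 0 → algebraMap F E c * t ∈ T) :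
    ((∀ u ∈ T, ∑ t ∈ T, kloosterman 2 E t u = (Fintype.card F : ℂ) ^ 2 - T.card) ∧
      (∀ u : E, u ≠ 0 → u ∉ T → ∑ t ∈ T, kloosterman 2 E t u = -(T.card : ℂ)))
    ↔ T.image (fun t => t⁻¹) = T := by
  have hsum {u : E} (hu : u ≠ 0) :=
    sum_kloosterman_of_invariant (Module.finrank_eq_of_card_eq_pow hcard) hT0 hinv hu
  have hq : (Fintype.card F : ℂ) ^ 2 ≠ 0 := by simp [Fintype.card_ne_zero]
  rw [Finset.image_inv_eq_self_iff]
  refine ⟨fun ⟨hmem, _⟩ t ht ↦ by_contra fun h ↦ hq ?_, fun h ↦ ⟨fun u hu ↦ ?_, fun u hu huT ↦ ?_⟩⟩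
  · have hkt := hmem t ht
    rw [hsum (hT0 t ht), if_neg h] at hkt
    linear_combination -hkt
  · rw [hsum (hT0 u hu), if_pos (h u hu), mul_one]
  · rw [hsum hu, if_neg fun h' ↦ huT (inv_inv u ▸ h _ h'), mul_zero, zero_sub]
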